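/- Let σ : ℝ → ℝ be an activation function with the universal approximation property: for any L-Lipschitz h : ℝ → ℝ constant outside [−R, R] and any δ > 0 there is a 2-layer σ-net of size at most c_σ RL/δ approximating h uniformly on ℝ to within δ. Then for any M > 0 and δ > 0 there exists a function g : ℝ² → ℝ of the form g(x,y) = (1/4)(g₀(x+y) − g₀(x−y)), where g₀ is a 2-layer σ-net of size at most 4c_σ · 4M²/δ, such that sup_{x,y ∈ [−M,M]} |g(x,y) − xy| ≤ δ. -/
import Mathlib


/-- A 2-layer neural net with activation `σ` and size `m`:
`u ↦ a + Σ_{i=1}^m α_i σ(β_i u + γ_i)`. -/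
def IsTwoLayerNet (σ : ℝ → ℝ) (m : ℕ) (g : ℝ → ℝ) : Prop :=
  ∃ (a : ℝ) (α β γ : Fin m → ℝ), g = fun u => a + ∑ i, α i * σ (β i * u + γ i)

/-- The universal approximation property of an activation `σ` with constant `c_σ`:
any `L`-Lipschitz function which is constant on `(-∞, -R]` and on `[R, ∞)` can be
`δ`-approximated uniformly on `ℝ` by a 2-layer `σ`-net of size at most `c_σ R L / δ`. -/
def UniversalActivation (σ : ℝ → ℝ) (cσ : ℝ) : Prop :=
  ∀ (L R δ : ℝ) (h : ℝ → ℝ), 0 ≤ L → 0 < R → 0 < δ →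
    (∀ x y, |h x - h y| ≤ L * |x - y|) →
    (∀ x y, x ≤ -R → y ≤ -R → h x = h y) →
    (∀ x y, R ≤ x → R ≤ y → h x = h y) →
    ∃ (m : ℕ) (g : ℝ → ℝ), (m : ℝ) ≤ cσ * R * L / δ ∧ IsTwoLayerNet σ m g ∧
      ∀ x, |g x - h x| ≤ δ

private lemma min_lip (c x y : ℝ) : |min x c - min y c| ≤ |x - y| := by
  have h1 := le_abs_self (x - y)
  have h2 := neg_abs_le (x - y)
  rcases le_total x c with h | h <;> rcases le_total y c with h' | h'
  · rw [min_eq_left h, min_eq_left h']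
  · rw [min_eq_left h, min_eq_right h', abs_le]; constructor <;> linarith
  · rw [min_eq_right h, min_eq_left h', abs_le]; constructor <;> linarith
  · rw [min_eq_right h, min_eq_right h']
    simp [abs_nonneg]

/-- approximation of multiplication on `[−M,M]²` by
`g(x,y) = (1/4)(g₀(x+y) − g₀(x−y))` where `g₀` is a 2-layer `σ`-net of size at most
`4 c_σ · 4M²/δ`. -/
theorem approx_multiplication (σ : ℝ → ℝ) (cσ : ℝ) (hσ : UniversalActivation σ cσ)
    (M δ : ℝ) (hM : 0 < M) (hδ : 0 < δ) :
    ∃ (m : ℕ) (g₀ : ℝ → ℝ), IsTwoLayerNet σ m g₀ ∧ (m : ℝ) ≤ 4 * cσ * (4 * M ^ 2) / δ ∧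
      ∀ x ∈ Set.Icc (-M) M, ∀ y ∈ Set.Icc (-M) M,
        |(1 / 4) * (g₀ (x + y) - g₀ (x - y)) - x * y| ≤ δ := by
  set h : ℝ → ℝ := fun u => (min |u| (2 * M)) ^ 2 with hh
  have hlip : ∀ x y, |h x - h y| ≤ (4 * M) * |x - y| := by
    intro x y
    set a := min |x| (2 * M) with ha
    set b := min |y| (2 * M) with hb
    have ha0 : 0 ≤ a := le_min (abs_nonneg x) (by positivity)
    have hb0 : 0 ≤ b := le_min (abs_nonneg y) (by positivity)
    have ha2 : a ≤ 2 * M := min_le_right _ _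
    have hb2 : b ≤ 2 * M := min_le_right _ _
    have hab : |a - b| ≤ |x - y| :=
      le_trans (min_lip (2 * M) |x| |y|) (abs_abs_sub_abs_le_abs_sub x y)
    have h1 : a - b ≤ |x - y| := (abs_le.mp hab).2
    have h2 : -(|x - y|) ≤ a - b := (abs_le.mp hab).1
    show |a ^ 2 - b ^ 2| ≤ (4 * M) * |x - y|
    rw [abs_le]
    constructor <;> nlinarith [abs_nonneg (x - y)]
  have hleft : ∀ x y : ℝ, x ≤ -(2 * M) → y ≤ -(2 * M) → h x = h y := by
    intro x y hx hy
    have hx' : 2 * M ≤ |x| := by rw [abs_of_nonpos (by linarith)]; linarith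
    have hy' : 2 * M ≤ |y| := by rw [abs_of_nonpos (by linarith)]; linarith
    simp only [hh, min_eq_right hx', min_eq_right hy']
  have hright : ∀ x y : ℝ, 2 * M ≤ x → 2 * M ≤ y → h x = h y := by
    intro x y hx hy
    have hx' : 2 * M ≤ |x| := le_trans hx (le_abs_self x)
    have hy' : 2 * M ≤ |y| := le_trans hy (le_abs_self y)
    simp only [hh, min_eq_right hx', min_eq_right hy']
  obtain ⟨m, g, hm, hnet, happ⟩ := hσ (4 * M) (2 * M) (2 * δ) h (by positivity)
    (by positivity) (by positivity) hlip hleft hright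
  have hmsize : (m : ℝ) ≤ 4 * cσ * (4 * M ^ 2) / δ := by
    have hm' : (m : ℝ) ≤ cσ * (2 * M) * (4 * M) / (2 * δ) := hm
    have hm0 : (0 : ℝ) ≤ m := Nat.cast_nonneg m
    have hc : 0 ≤ cσ := by
      by_contra hc
      push_neg at hc
      have : cσ * (2 * M) * (4 * M) / (2 * δ) < 0 := by
        apply div_neg_of_neg_of_pos
        · have := mul_neg_of_neg_of_pos hc (show (0:ℝ) < 8 * M ^ 2 by positivity)
          nlinarith
        · linarith
      linarith
    calc (m : ℝ) ≤ cσ * (2 * M) * (4 * M) / (2 * δ) := hm'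
      _ = 4 * cσ * M ^ 2 / δ := by ring
      _ ≤ 4 * cσ * (4 * M ^ 2) / δ := by
          rw [div_le_div_iff₀ hδ hδ]
          nlinarith [mul_nonneg (mul_nonneg hc (sq_nonneg M)) hδ.le]
  refine ⟨m, g, hnet, hmsize, ?_⟩
  intro x hx y hy
  obtain ⟨hx1, hx2⟩ := hx
  obtain ⟨hy1, hy2⟩ := hy
  have hsum : |x + y| ≤ 2 * M := by rw [abs_le]; constructor <;> linarith
  have hdiff : |x - y| ≤ 2 * M := by rw [abs_le]; constructor <;> linarith
  have hhs : h (x + y) = (x + y) ^ 2 := by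
    simp only [hh, min_eq_left hsum, sq_abs]
  have hhd : h (x - y) = (x - y) ^ 2 := by
    simp only [hh, min_eq_left hdiff, sq_abs]
  have e1 := abs_le.mp (happ (x + y))
  have e2 := abs_le.mp (happ (x - y))
  rw [hhs] at e1
  rw [hhd] at e2
  rw [abs_le]
  constructor <;> nlinarith [e1.1, e1.2, e2.1, e2.2]
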